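/- For every partition μ = (μ_1, …, μ_l) and every integer k ≥ 1, p_k^* Q_μ(t) = ∑_{i=1}^{l} Q_{(μ_1, …, μ_{i−1}, μ_i − k, μ_{i+1}, …, μ_l)}(t), where each index sequence on the right is an (in general non-monotone) integer sequence. -/

import Mathlib

/-!
`p_k^*` is `k/(1 - t^k)` times the derivation `∂/∂p_k`, and it lowers `q_m` to `q_{m-k}`:
removing one part `k` is a bijection from the partitions of `m` containing `k` onto the
partitions of `m - k`, and `z_{k ∪ σ}(t) = k (m_k(σ) + 1) / (1 - t^k) · z_σ(t)` cancels exactly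
the factor `k (m_k(σ) + 1) / (1 - t^k)` that differentiating `p_{k ∪ σ}` produces.
By the Leibniz rule `p_k^* q_β = ∑_i q_{β - k e_i}`. Raising operators only shift the index, so
they commute with lowering one entry by `k`; and once all entries of a raised index are
nonnegative its exponents are bounded, so only finitely many raising monomials contribute and
`p_k^*` passes through the sum defining `Q_α`. This gives the formula for every integer
sequence `α`, not only for partitions.
-/

open scoped BigOperators

namespace Green

noncomputable section

/-- The base field `F = ℚ(t)`, the field of rational functions in `t`. -/
abbrev FF : Type := RatFunc ℚ

/-- The indeterminate `t ∈ ℚ(t)`. -/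
def tF : FF := RatFunc.X

/-- The ring of symmetric functions over `F`, identified with the polynomial ring
`F[p₁, p₂, …]` on the power sums, variables indexed by positive integers. -/
abbrev SymF : Type := MvPolynomial ℕ+ FF

/-- The power sum `p_n` for `n ≥ 1` (junk value `1` if `n = 0`). -/
def pS (n : ℕ) : SymF := if h : 0 < n then MvPolynomial.X (⟨n, h⟩ : ℕ+) else 1

/-- `p_λ = p_{λ₁} ⋯ p_{λ_l}` for a partition given as a multiset of parts. -/
def pMs (m : Multiset ℕ) : SymF := (m.map pS).prod

/-- `z_λ = ∏_i i^{m_i} · m_i!` where `m_i` is the multiplicity of `i` in `λ`. -/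
def zMs (m : Multiset ℕ) : ℕ :=
  m.toFinset.prod fun i => i ^ m.count i * (m.count i).factorial

/-- `z_λ(t) = z_λ / ∏_j (1 - t^{λ_j})`. -/
def ztMs (m : Multiset ℕ) : FF := (zMs m : FF) / (m.map fun i => 1 - tF ^ i).prod

/-- `q_k`: equal to `0` for `k < 0`, `1` for `k = 0`, and `∑_{ν ⊢ k} z_ν(t)⁻¹ p_ν` for `k ≥ 1`. -/
def qq (k : ℤ) : SymF :=
  if k < 0 then 0
  else ∑ ν : Nat.Partition k.toNat, (ztMs ν.parts)⁻¹ • pMs ν.parts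

/-- Coefficients of `(1 - R)(∑_{k≥0} t^k R^k) = 1 + ∑_{k≥1} (t^k - t^{k-1}) R^k`. -/
def cRO : ℕ → FF
  | 0 => 1
  | k + 1 => tF ^ (k + 1) - tF ^ k

/-- Index pairs `i < j` for the raising operators `R_{ij}`. -/
abbrev PairsLT (l : ℕ) : Type := {pr : Fin l × Fin l // pr.1 < pr.2}

/-- The result of applying `∏_{i<j} R_{ij}^{k_{ij}}` to the integer tuple `α`,
where `R_{ij}` translates the index by `e_i - e_j`. -/
def raised {l : ℕ} (α : Fin l → ℤ) (k : PairsLT l → ℕ) : Fin l → ℤ := fun r =>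
  α r + ∑ pr : PairsLT l, (k pr : ℤ) *
    ((if pr.val.1 = r then 1 else 0) - (if pr.val.2 = r then 1 else 0))

/-- `q_β = q_{β₁} ⋯ q_{β_l}` for an integer tuple `β`. -/
def qTup {l : ℕ} (β : Fin l → ℤ) : SymF := ∏ i, qq (β i)

/-- The Hall–Littlewood function
`Q_α(t) = ∏_{1≤i<j≤l} (1 - R_{ij})(∑_{k≥0} t^k R_{ij}^k) q_α`,
the (finitely supported) expansion of the product of raising-operator series. -/
def QTup {l : ℕ} (α : Fin l → ℤ) : SymF :=
  finsum fun k : PairsLT l → ℕ => (∏ pr, cRO (k pr)) • qTup (raised α k)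

/-- `Q_α(t)` for an integer list `α`. -/
def QL (α : List ℤ) : SymF := QTup fun i : Fin α.length => α.get i

/-- The weakly decreasing sort of a multiset of naturals. -/
def sortDesc (m : Multiset ℕ) : List ℕ := (m.sort (· ≤ ·)).reverse

/-- `Q_λ(t)` for a partition given as a multiset of parts. -/
def QMs (m : Multiset ℕ) : SymF := QL ((sortDesc m).map fun i => (i : ℤ))

/-- The operator `p_k^* = (k/(1 - t^k)) ∂/∂p_k` (junk value `0` for `k = 0`). -/
def pstar (k : ℕ) (f : SymF) : SymF :=
  if h : 0 < k then ((k : FF) / (1 - tF ^ k)) • MvPolynomial.pderiv (⟨k, h⟩ : ℕ+) f else 0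

lemma one_sub_tF_pow_ne_zero {k : ℕ} (hk : 0 < k) : (1 : FF) - tF ^ k ≠ 0 := by
  rw [sub_ne_zero, ne_comm, tF, ← RatFunc.algebraMap_X, ← map_pow,
    ← map_one (algebraMap (Polynomial ℚ) (RatFunc ℚ)),
    (RatFunc.algebraMap_injective ℚ).ne_iff]
  intro h
  simpa [hk.ne'] using congrArg Polynomial.natDegree h

theorem _root_.Derivation.leibniz_finset_prod {R A M ι : Type*} [CommSemiring R] [CommSemiring A]
    [AddCommMonoid M] [Algebra R A] [Module A M] [Module R M] [DecidableEq ι]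
    (D : Derivation R A M) (s : Finset ι) (f : ι → A) :
    D (∏ i ∈ s, f i) = ∑ i ∈ s, (∏ j ∈ s.erase i, f j) • D (f i) := by
  induction s using Finset.induction_on with
  | empty => simp
  | @insert a s ha ih =>
    rw [Finset.prod_insert ha, D.leibniz, ih, Finset.sum_insert ha, Finset.erase_insert ha,
      Finset.smul_sum, add_comm]
    congr 1
    refine Finset.sum_congr rfl fun i hi => ?_
    rw [Finset.erase_insert_of_ne (ne_of_mem_of_not_mem hi ha).symm, Finset.prod_insert
      (fun h => ha (Finset.mem_of_mem_erase h)), smul_smul]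

def pstarDeriv (k : ℕ+) : Derivation FF SymF SymF :=
  ((k : FF) / (1 - tF ^ (k : ℕ))) • MvPolynomial.pderiv k

lemma pstar_eq_pstarDeriv (k : ℕ+) : pstar k = pstarDeriv k :=
  funext fun _ => dif_pos k.pos

lemma pderiv_pS (k : ℕ+) (a : ℕ) : MvPolynomial.pderiv k (pS a) = if a = k then 1 else 0 := by
  unfold pS
  split_ifs with ha hak hak
  · subst hak; exact MvPolynomial.pderiv_X_self _
  · exact MvPolynomial.pderiv_X_of_ne fun h => hak (congrArg PNat.val h)
  · exact absurd (hak ▸ k.pos) ha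
  · exact MvPolynomial.pderiv_one

lemma pderiv_pMs (k : ℕ+) (s : Multiset ℕ) :
    MvPolynomial.pderiv k (pMs s) = s.count (k : ℕ) • pMs (s.erase k) := by
  induction s using Multiset.induction_on with
  | empty => simp [pMs]
  | cons a s ih =>
    simp only [pMs] at ih ⊢
    rw [Multiset.map_cons, Multiset.prod_cons, Derivation.leibniz, ih, pderiv_pS, smul_eq_mul,
      smul_eq_mul]
    by_cases hak : a = k
    · subst hak
      have hcons : s.count (k : ℕ) • (pS k * ((s.erase k).map pS).prod)
          = s.count (k : ℕ) • (s.map pS).prod := by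
        by_cases hk : (k : ℕ) ∈ s
        · rw [← Multiset.prod_cons, ← Multiset.map_cons, Multiset.cons_erase hk]
        · simp [Multiset.count_eq_zero.2 hk]
      rw [if_pos rfl, Multiset.count_cons_self, Multiset.erase_cons_head, mul_smul_comm, hcons,
        mul_one, succ_nsmul]
    · rw [if_neg hak, Multiset.count_cons_of_ne (Ne.symm hak), Multiset.erase_cons_tail s hak,
        Multiset.map_cons, Multiset.prod_cons, mul_zero, add_zero, mul_smul_comm]

lemma zMs_cons (a : ℕ) (s : Multiset ℕ) :
    zMs (a ::ₘ s) = a * (s.count a + 1) * zMs s := by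
  set g : Multiset ℕ → ℕ → ℕ := fun m i => i ^ m.count i * (m.count i).factorial
  set T := insert a s.toFinset
  have hs : zMs s = ∏ i ∈ T, g s i := by
    refine Finset.prod_subset (Finset.subset_insert _ _) fun i _ hi => ?_
    simp [Multiset.count_eq_zero.2 (by simpa using hi)]
  have hrest : ∏ i ∈ T.erase a, g (a ::ₘ s) i = ∏ i ∈ T.erase a, g s i :=
    Finset.prod_congr rfl fun i hi => by
      simp only [g, Multiset.count_cons_of_ne (Finset.ne_of_mem_erase hi)]
  have hT : zMs (a ::ₘ s) = ∏ i ∈ T, g (a ::ₘ s) i := by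
    rw [zMs, Multiset.toFinset_cons]
  rw [hT, hs, ← Finset.mul_prod_erase _ _ (Finset.mem_insert_self a _),
    ← Finset.mul_prod_erase T (g s) (Finset.mem_insert_self a _), hrest]
  simp only [g, Multiset.count_cons_self, pow_succ, Nat.factorial_succ]
  ring

lemma ztMs_inv_cons {k : ℕ} (hk : 0 < k) (s : Multiset ℕ) :
    (k : FF) / (1 - tF ^ k) * (ztMs (k ::ₘ s))⁻¹ * (s.count k + 1 : FF) = (ztMs s)⁻¹ := by
  have hT : (1 : FF) - tF ^ k ≠ 0 := one_sub_tF_pow_ne_zero hk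
  have hk0 : (k : FF) ≠ 0 := Nat.cast_ne_zero.2 hk.ne'
  have hc : (s.count k + 1 : FF) ≠ 0 := Nat.cast_add_one_ne_zero _
  rw [ztMs, ztMs, Multiset.map_cons, Multiset.prod_cons, zMs_cons, inv_div, inv_div]
  push_cast
  field_simp

lemma pstarDeriv_smul_pMs (k : ℕ+) (c : FF) (s : Multiset ℕ) :
    pstarDeriv k (c • pMs s)
      = ((k : FF) / (1 - tF ^ (k : ℕ)) * c * s.count (k : ℕ)) • pMs (s.erase k) := by
  rw [pstarDeriv, Derivation.smul_apply, Derivation.map_smul, pderiv_pMs,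
    ← Nat.cast_smul_eq_nsmul FF, smul_smul, smul_smul]

lemma pstarDeriv_smul_pMs_of_notMem (k : ℕ+) (c : FF) {s : Multiset ℕ} (hs : (k : ℕ) ∉ s) :
    pstarDeriv k (c • pMs s) = 0 := by
  rw [pstarDeriv_smul_pMs, Multiset.count_eq_zero.2 hs, Nat.cast_zero, mul_zero, zero_smul]

lemma pstarDeriv_smul_pMs_cons (k : ℕ+) (s : Multiset ℕ) :
    pstarDeriv k ((ztMs (k ::ₘ s))⁻¹ • pMs (k ::ₘ s)) = (ztMs s)⁻¹ • pMs s := by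
  rw [pstarDeriv_smul_pMs, Multiset.count_cons_self, Multiset.erase_cons_head, Nat.cast_succ,
    ztMs_inv_cons k.pos]

lemma pstarDeriv_qq (k : ℕ+) (m : ℤ) : pstarDeriv k (qq m) = qq (m - k) := by
  classical
  rcases lt_or_ge m 0 with hm | hm
  · rw [qq, if_pos hm, qq, if_pos (by omega), map_zero]
  obtain ⟨n, rfl⟩ := Int.eq_ofNat_of_zero_le hm
  rw [qq, if_neg (not_lt.2 hm), map_sum, Int.toNat_natCast,
    ← Fintype.sum_subtype_add_sum_subtype fun ν : n.Partition => (k : ℕ) ∈ ν.parts,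
    Fintype.sum_eq_zero (fun ν : {ν : n.Partition // (k : ℕ) ∉ ν.parts} => _)
      fun ν => pstarDeriv_smul_pMs_of_notMem k _ ν.2, add_zero]
  rcases le_or_gt (k : ℕ) n with hkn | hnk
  · rw [qq, if_neg (by omega), show ((n : ℤ) - k).toNat = n - k by omega]
    refine (Fintype.sum_equiv (Nat.Partition.partitionWithPartEquiv k.pos hkn).symm _ _
      fun σ => ?_).symm
    rw [Nat.Partition.partitionWithPartEquiv_symm_apply_parts, pstarDeriv_smul_pMs_cons]
  · rw [qq, if_pos (by omega)]
    exact Fintype.sum_eq_zero _ fun ν => absurd (Nat.Partition.le_of_mem_parts ν.2) (by omega)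

lemma pstarDeriv_qTup (k : ℕ+) {l : ℕ} (β : Fin l → ℤ) :
    pstarDeriv k (qTup β) = ∑ i, qTup (β - Pi.single i (k : ℤ)) := by
  rw [qTup, Derivation.leibniz_finset_prod]
  refine Finset.sum_congr rfl fun i _ => ?_
  rw [pstarDeriv_qq, qTup, ← Finset.mul_prod_erase _ _ (Finset.mem_univ i), smul_eq_mul, mul_comm]
  congr 1
  · simp
  · exact Finset.prod_congr rfl fun j hj => by simp [Finset.ne_of_mem_erase hj]

lemma nonneg_of_qTup_ne_zero {l : ℕ} {β : Fin l → ℤ} (h : qTup β ≠ 0) (r : Fin l) :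
    0 ≤ β r := by
  by_contra hr
  exact h (Finset.prod_eq_zero (Finset.mem_univ r) (if_pos (not_le.1 hr)))

lemma raised_sub {l : ℕ} (α β : Fin l → ℤ) (kk : PairsLT l → ℕ) :
    raised (α - β) kk = raised α kk - β := by
  funext r
  simp only [raised, Pi.sub_apply]
  ring

lemma sum_raised {l : ℕ} (α : Fin l → ℤ) (kk : PairsLT l → ℕ) (s : Finset (Fin l)) :
    ∑ r ∈ s, raised α kk r = ∑ r ∈ s, α r - ∑ pr : PairsLT l, (kk pr : ℤ) *
      ((if pr.val.2 ∈ s then 1 else 0) - (if pr.val.1 ∈ s then 1 else 0)) := by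
  simp only [raised, Finset.sum_add_distrib]
  rw [Finset.sum_comm, sub_eq_add_neg, ← Finset.sum_neg_distrib]
  congr 1
  refine Finset.sum_congr rfl fun pr _ => ?_
  rw [← Finset.mul_sum, Finset.sum_sub_distrib, Finset.sum_ite_eq, Finset.sum_ite_eq]
  ring

lemma raising_exponent_le {l : ℕ} {α : Fin l → ℤ} {kk : PairsLT l → ℕ}
    (h : ∀ r, 0 ≤ raised α kk r) (pr : PairsLT l) :
    (kk pr : ℤ) ≤ ∑ r ∈ Finset.univ.filter (pr.val.2 ≤ ·), α r := by
  -- Every `R_{ij}` moves weight towards smaller indices, so on the tail `s = {r ≥ j}` no pair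
  -- adds weight and the pair `(i, j)` itself removes `kk (i, j)`.
  set s := Finset.univ.filter (pr.val.2 ≤ ·)
  have hterm : ∀ pr' : PairsLT l,
      0 ≤ (kk pr' : ℤ) *
        ((if pr'.val.2 ∈ s then 1 else 0) - (if pr'.val.1 ∈ s then 1 else 0)) := by
    intro pr'
    have : pr'.val.1 ∈ s → pr'.val.2 ∈ s := by
      simp only [s, Finset.mem_filter, Finset.mem_univ, true_and]
      exact fun h => h.trans pr'.2.le
    refine mul_nonneg (Nat.cast_nonneg _) ?_
    split_ifs <;> simp_all
  have hself : (kk pr : ℤ) *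
      ((if pr.val.2 ∈ s then 1 else 0) - (if pr.val.1 ∈ s then 1 else 0)) = kk pr := by
    simp [s, not_le.2 pr.2]
  have hpr := Finset.single_le_sum (fun pr' _ => hterm pr') (Finset.mem_univ pr)
  have hsum := Finset.sum_nonneg fun r (_ : r ∈ s) => h r
  rw [sum_raised] at hsum
  rw [hself] at hpr
  linarith

lemma finite_support_QTup_summand {l : ℕ} (α : Fin l → ℤ) :
    (Function.support fun kk : PairsLT l → ℕ =>
      (∏ pr, cRO (kk pr)) • qTup (raised α kk)).Finite := by
  refine (Fintype.piFinset fun _ => Finset.range ((∑ r, |α r|).toNat + 1)).finite_toSet.subset ?_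
  intro kk hkk
  have hq : qTup (raised α kk) ≠ 0 := fun h => hkk (by simp [h])
  simp only [Fintype.coe_piFinset, Set.mem_pi, Set.mem_univ,
    Finset.mem_coe, Finset.mem_range, forall_const]
  intro pr
  have h1 := raising_exponent_le (nonneg_of_qTup_ne_zero hq) pr
  have h2 : ∑ r ∈ Finset.univ.filter (pr.val.2 ≤ ·), α r ≤ ∑ r, |α r| :=
    (Finset.sum_le_sum fun r _ => le_abs_self (α r)).trans
      (Finset.sum_le_sum_of_subset_of_nonneg (Finset.filter_subset _ _) fun r _ _ => abs_nonneg _)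
  omega

lemma pstarDeriv_QTup (k : ℕ+) {l : ℕ} (α : Fin l → ℤ) :
    pstarDeriv k (QTup α) = ∑ i, QTup (α - Pi.single i (k : ℤ)) := by
  unfold QTup
  rw [map_finsum _ (finite_support_QTup_summand α)]
  simp only [Derivation.map_smul, pstarDeriv_qTup, Finset.smul_sum, ← raised_sub]
  exact finsum_sum_comm _ _ fun i _ => finite_support_QTup_summand _

lemma QL_eq_QTup {n : ℕ} (α : List ℤ) (h : α.length = n) (β : Fin n → ℤ)
    (hβ : ∀ i : Fin n, α.get (Fin.cast h.symm i) = β i) : QL α = QTup β := by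
  subst h
  exact congrArg QTup (funext hβ)

-- `μ.map fun x => (x : ℤ)` elaborates with the coercion lifted through the list monad,
-- as `List.map id (do let a ← μ; pure ↑a)`.
lemma map_coe_eq_map_natCast (μ : List ℕ) :
    (μ.map fun x => (x : ℤ)) = μ.map (Nat.cast : ℕ → ℤ) := by
  induction μ with
  | nil => rfl
  | cons a μ ih => simpa using ih

theorem statement4_general (μ : List ℕ) (k : ℕ) (hk : 1 ≤ k) :
    pstar k (QL (μ.map fun x => (x : ℤ)))
      = ∑ i : Fin μ.length,
          QL ((μ.map fun x => (x : ℤ)).set i ((μ.get i : ℤ) - k)) := by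
  lift k to ℕ+ using hk
  rw [map_coe_eq_map_natCast,
    QL_eq_QTup _ (List.length_map _) (fun i => (μ.get i : ℤ)) (by simp),
    pstar_eq_pstarDeriv, pstarDeriv_QTup]
  refine Finset.sum_congr rfl fun i _ => (QL_eq_QTup _ (by simp) _ fun j => ?_).symm
  rcases eq_or_ne j i with rfl | hji
  · simp
  · simp [hji, Fin.val_ne_of_ne hji.symm]

/-- For a partition `μ = (μ₁, …, μ_l)` and `k ≥ 1`,
`p_k^* Q_μ(t) = ∑_{i=1}^{l} Q_{(μ₁, …, μ_i - k, …, μ_l)}(t)`. -/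
theorem statement4 (μ : List ℕ) (hsort : μ.Pairwise (· ≥ ·)) (hpos : ∀ x ∈ μ, 0 < x)
    (k : ℕ) (hk : 1 ≤ k) :
    pstar k (QL (μ.map fun x => (x : ℤ)))
      = ∑ i : Fin μ.length,
          QL ((μ.map fun x => (x : ℤ)).set i ((μ.get i : ℤ) - k)) :=
  statement4_general μ k hk

end
end Green
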